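/- arXiv:1409.3869 — 2 statements merged into one kernel-verified Lean document; each statement's English description precedes it below -/
import Mathlib

section
/- For all n ≥ k+1 and k ≥ 1, T(2,n;k) = T(2,n-1;k) + 2·∑_{r=1}^{k} T(2,n-r-1;k-r). -/
/-! Sort the independent `k`-sets of the `2 × (n + 1)` grid by their last column: it is empty,
holds the top cell, or holds the bottom cell. The row swap matches the last two classes, so
`T(n + 1, k) = T(n, k) + 2 a(n, k)`, where `a(n, k)` counts the sets containing the top cell
`(0, n)`. Deleting that cell identifies `a(n + 1, k + 1)` with the `k`-sets of the `2 × (n + 1)`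
grid avoiding `(0, n)`, of which there are `T(n + 1, k) - a(n, k) = T(n, k) + a(n, k)`.
Unrolling gives `a(n, k) = ∑_{r=1}^{k} T(n - r, k - r)`, since `a(n, 0) = 0`. -/

/-- Two grid squares (given as (row, column) pairs) are adjacent if they agree in one
coordinate and differ by one in the other. -/
def Adj (p q : ℕ × ℕ) : Prop :=
  (p.1 = q.1 ∧ (p.2 + 1 = q.2 ∨ q.2 + 1 = p.2)) ∨
  (p.2 = q.2 ∧ (p.1 + 1 = q.1 ∨ q.1 + 1 = p.1))

instance : DecidableRel Adj := fun _ _ => by unfold Adj; infer_instance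

/-- `T m n k` is the number of ways to select `k` squares from an `m × n` grid with
no two selected squares horizontally or vertically adjacent. -/
def T (m n k : ℕ) : ℕ :=
  (((Finset.range m ×ˢ Finset.range n).powersetCard k).filter
    (fun s => ∀ p ∈ s, ∀ q ∈ s, ¬ Adj p q)).card

open Finset

lemma Finset.sum_Icc_one_succ {M : Type*} [AddCommMonoid M] (f : ℕ → M) (k : ℕ) :
    ∑ r ∈ Icc 1 (k + 1), f r = f 1 + ∑ r ∈ Icc 1 k, f (r + 1) := by
  induction k with
  | zero => simp
  | succ k ih => rw [sum_Icc_succ_top (by omega), ih, sum_Icc_succ_top (by omega), add_assoc]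

lemma Adj.symm {p q : ℕ × ℕ} (h : Adj p q) : Adj q p := by
  unfold Adj at *; omega

lemma Adj.irrefl (p : ℕ × ℕ) : ¬ Adj p p := by
  unfold Adj; omega

namespace Grid

def IsIndep (s : Finset (ℕ × ℕ)) : Prop := ∀ p ∈ s, ∀ q ∈ s, ¬ Adj p q

instance : DecidablePred IsIndep := fun _ => by unfold IsIndep; infer_instance

lemma IsIndep.mono {s t : Finset (ℕ × ℕ)} (hs : IsIndep s) (hts : t ⊆ s) : IsIndep t :=
  fun p hp q hq => hs p (hts hp) q (hts hq)

lemma isIndep_insert {p : ℕ × ℕ} {s : Finset (ℕ × ℕ)} :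
    IsIndep (insert p s) ↔ IsIndep s ∧ ∀ q ∈ s, ¬ Adj p q := by
  refine ⟨fun h => ⟨h.mono (subset_insert p s), fun q hq => h p (mem_insert_self p s) q
    (mem_insert_of_mem hq)⟩, fun ⟨hs, hp⟩ => ?_⟩
  simp only [IsIndep, mem_insert, forall_eq_or_imp]
  exact ⟨⟨Adj.irrefl p, hp⟩, fun q hq => ⟨fun h => hp q hq h.symm, hs q hq⟩⟩

def indepSets (m n k : ℕ) : Finset (Finset (ℕ × ℕ)) :=
  ((range m ×ˢ range n).powersetCard k).filter IsIndep

lemma T_eq_card_indepSets (m n k : ℕ) : T m n k = #(indepSets m n k) := rfl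

lemma mem_indepSets {m n k : ℕ} {s : Finset (ℕ × ℕ)} :
    s ∈ indepSets m n k ↔ (∀ p ∈ s, p.1 < m ∧ p.2 < n) ∧ #s = k ∧ IsIndep s := by
  simp only [indepSets, mem_filter, mem_powersetCard, subset_iff, mem_product, mem_range,
    and_assoc]

lemma erase_mem_indepSets {m n k : ℕ} {s : Finset (ℕ × ℕ)} {p : ℕ × ℕ}
    (hs : s ∈ indepSets m n (k + 1)) (hp : p ∈ s) : s.erase p ∈ indepSets m n k := by
  obtain ⟨hgrid, hcard, hind⟩ := mem_indepSets.mp hs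
  exact mem_indepSets.mpr ⟨fun q hq => hgrid q (mem_of_mem_erase hq),
    by rw [card_erase_of_mem hp, hcard, Nat.add_sub_cancel], hind.mono (erase_subset p s)⟩

lemma insert_mem_indepSets {m n k : ℕ} {s : Finset (ℕ × ℕ)} {p : ℕ × ℕ}
    (hs : s ∈ indepSets m n k) (hpm : p.1 < m) (hpn : p.2 < n) (hp : p ∉ s)
    (hadj : ∀ q ∈ s, ¬ Adj p q) : insert p s ∈ indepSets m n (k + 1) := by
  obtain ⟨hgrid, hcard, hind⟩ := mem_indepSets.mp hs
  refine mem_indepSets.mpr ⟨?_, by rw [card_insert_of_notMem hp, hcard],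
    isIndep_insert.mpr ⟨hind, hadj⟩⟩
  simp only [mem_insert, forall_eq_or_imp]
  exact ⟨⟨hpm, hpn⟩, hgrid⟩

lemma mem_indepSets_two_iff {n k : ℕ} {s : Finset (ℕ × ℕ)} :
    s ∈ indepSets 2 n k ↔ s ∈ indepSets 2 (n + 1) k ∧ (0, n) ∉ s ∧ (1, n) ∉ s := by
  simp only [mem_indepSets]
  constructor
  · rintro ⟨hgrid, hcard, hind⟩
    refine ⟨⟨fun p hp => ?_, hcard, hind⟩, fun h => ?_, fun h => ?_⟩
    · have := hgrid p hp; omega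
    · have := hgrid _ h; omega
    · have := hgrid _ h; omega
  · rintro ⟨⟨hgrid, hcard, hind⟩, h0, h1⟩
    refine ⟨fun ⟨a, b⟩ hp => ?_, hcard, hind⟩
    obtain ⟨ha, hb⟩ : a < 2 ∧ b < n + 1 := hgrid _ hp
    refine ⟨ha, lt_of_le_of_ne (Nat.le_of_lt_succ hb) fun hbn => ?_⟩
    interval_cases a <;> subst hbn <;> contradiction

-- An involution of the two-row grid only: rows `≥ 2` are sent to row `0`.
def swapRows (p : ℕ × ℕ) : ℕ × ℕ := (1 - p.1, p.2)

lemma image_swapRows_mem_indepSets {n k : ℕ} {s : Finset (ℕ × ℕ)} (hs : s ∈ indepSets 2 n k) :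
    s.image swapRows ∈ indepSets 2 n k := by
  obtain ⟨hgrid, hcard, hind⟩ := mem_indepSets.mp hs
  refine mem_indepSets.mpr ⟨?_, ?_, ?_⟩
  · simp only [mem_image, forall_exists_index, and_imp, forall_apply_eq_imp_iff₂, swapRows]
    intro p hp
    have := hgrid p hp
    omega
  · rw [card_image_of_injOn, hcard]
    intro p hp q hq hpq
    have := hgrid p hp
    have := hgrid q hq
    simp only [swapRows, Prod.mk.injEq] at hpq
    ext <;> omega
  · simp only [IsIndep, mem_image, forall_exists_index, and_imp, forall_apply_eq_imp_iff₂]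
    intro p hp q hq
    have := hgrid p hp
    have := hgrid q hq
    have := hind p hp q hq
    unfold Adj swapRows at *
    omega

lemma image_swapRows_image_swapRows {n k : ℕ} {s : Finset (ℕ × ℕ)} (hs : s ∈ indepSets 2 n k) :
    (s.image swapRows).image swapRows = s := by
  have hgrid := (mem_indepSets.mp hs).1
  rw [image_image]
  refine (image_congr fun p hp => ?_).trans image_id
  have := hgrid p hp
  simp only [Function.comp_apply, swapRows, id_eq, Prod.ext_iff, and_true]
  omega

lemma card_filter_mem_top_eq_bottom (n k j : ℕ) :
    #{s ∈ indepSets 2 n k | (0, j) ∈ s} = #{s ∈ indepSets 2 n k | (1, j) ∈ s} := by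
  refine card_bij' (fun s _ => s.image swapRows) (fun s _ => s.image swapRows) ?_ ?_ ?_ ?_ <;>
    simp only [mem_filter, and_imp]
  · exact fun s hs h0 => ⟨image_swapRows_mem_indepSets hs, mem_image_of_mem swapRows h0⟩
  · exact fun s hs h1 => ⟨image_swapRows_mem_indepSets hs, mem_image_of_mem swapRows h1⟩
  · exact fun s hs _ => image_swapRows_image_swapRows hs
  · exact fun s hs _ => image_swapRows_image_swapRows hs

-- The grid has `n + 1` columns; `(0, n)` is the top cell of the last one.
def indepSetsWithTop (n k : ℕ) : Finset (Finset (ℕ × ℕ)) :=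
  {s ∈ indepSets 2 (n + 1) k | (0, n) ∈ s}

lemma card_indepSets_two_succ (n k : ℕ) :
    #(indepSets 2 (n + 1) k) = #(indepSets 2 n k) + 2 * #(indepSetsWithTop n k) := by
  rw [indepSetsWithTop]
  have hsym := card_filter_mem_top_eq_bottom (n + 1) k n
  set P := indepSets 2 (n + 1) k
  have hbottom : {s ∈ P | (0, n) ∉ s ∧ (1, n) ∈ s} = {s ∈ P | (1, n) ∈ s} :=
    filter_congr fun s hs => and_iff_right_of_imp fun h1 h0 =>
      (mem_indepSets.mp hs).2.2 _ h0 _ h1 (by simp [Adj])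
  have hempty : {s ∈ P | (0, n) ∉ s ∧ (1, n) ∉ s} = indepSets 2 n k := by
    ext s
    exact mem_filter.trans mem_indepSets_two_iff.symm
  have htop := card_filter_add_card_filter_not (s := P) (fun s => (0, n) ∈ s)
  have hnottop := card_filter_add_card_filter_not (s := {s ∈ P | (0, n) ∉ s}) (fun s => (1, n) ∈ s)
  rw [filter_filter, filter_filter, hbottom, hempty] at hnottop
  omega

lemma card_indepSetsWithTop_zero (n : ℕ) : #(indepSetsWithTop n 0) = 0 := by
  refine card_eq_zero.mpr (filter_eq_empty_iff.mpr fun s hs => ?_)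
  rw [card_eq_zero.mp (mem_indepSets.mp hs).2.1]
  exact notMem_empty _

lemma card_indepSetsWithTop_succ_succ (n k : ℕ) :
    #(indepSetsWithTop (n + 1) (k + 1)) = #(indepSetsWithTop n k) + #(indepSets 2 n k) := by
  have herase : #(indepSetsWithTop (n + 1) (k + 1)) =
      #{s ∈ indepSets 2 (n + 1) k | (0, n) ∉ s} := by
    refine card_bij' (fun s _ => s.erase (0, n + 1)) (fun s _ => insert (0, n + 1) s)
      ?_ ?_ ?_ ?_ <;> simp only [indepSetsWithTop, mem_filter, and_imp]
    · intro s hs h0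
      have hind := (mem_indepSets.mp hs).2.2
      refine ⟨mem_indepSets_two_iff.mpr ⟨erase_mem_indepSets hs h0, notMem_erase _ _,
        fun h1 => hind _ h0 _ (mem_of_mem_erase h1) (by simp [Adj])⟩,
        fun h => hind _ h0 _ (mem_of_mem_erase h) (by simp [Adj])⟩
    · intro t ht h0
      obtain ⟨ht', hnot0, -⟩ := mem_indepSets_two_iff.mp ht
      refine ⟨insert_mem_indepSets ht' (by norm_num) (by omega) hnot0 fun q hq => ?_,
        mem_insert_self _ _⟩
      have := (mem_indepSets.mp ht).1 q hq
      have : q ≠ (0, n) := fun h => h0 (h ▸ hq)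
      unfold Adj
      rw [Ne, Prod.ext_iff] at this
      omega
    · exact fun s _ h0 => insert_erase h0
    · exact fun t ht _ => erase_insert (mem_indepSets_two_iff.mp ht).2.1
  have hsplit := card_filter_add_card_filter_not (s := indepSets 2 (n + 1) k) (fun s => (0, n) ∈ s)
  have := card_indepSets_two_succ n k
  rw [herase, indepSetsWithTop] at *
  omega

lemma card_indepSetsWithTop_eq_sum {n k : ℕ} (hk : k ≤ n) :
    #(indepSetsWithTop n k) = ∑ r ∈ Icc 1 k, T 2 (n - r) (k - r) := by
  induction k generalizing n with
  | zero => simp [card_indepSetsWithTop_zero]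
  | succ k ih =>
    obtain ⟨m, rfl⟩ : ∃ m, n = m + 1 := ⟨n - 1, by omega⟩
    rw [card_indepSetsWithTop_succ_succ, ih (by omega), ← T_eq_card_indepSets, sum_Icc_one_succ,
      add_comm]
    simp only [Nat.add_sub_cancel, Nat.add_sub_add_right]

end Grid

theorem T2_hockeystick_general (n k : ℕ) (hn : k + 1 ≤ n) :
    T 2 n k = T 2 (n - 1) k + 2 * ∑ r ∈ Finset.Icc 1 k, T 2 (n - r - 1) (k - r) := by
  obtain ⟨m, rfl⟩ : ∃ m, n = m + 1 := ⟨n - 1, by omega⟩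
  rw [Grid.T_eq_card_indepSets 2 (m + 1), Grid.card_indepSets_two_succ,
    Grid.card_indepSetsWithTop_eq_sum (by omega), ← Grid.T_eq_card_indepSets, Nat.add_sub_cancel]
  congr 2
  refine sum_congr rfl fun r _ => ?_
  rw [Nat.sub_right_comm, Nat.add_sub_cancel]

theorem T2_hockeystick (n k : ℕ) (hk : 1 ≤ k) (hn : k + 1 ≤ n) :
    T 2 n k = T 2 (n - 1) k + 2 * ∑ r ∈ Finset.Icc 1 k, T 2 (n - r - 1) (k - r) :=
  T2_hockeystick_general n k hn
end

section
/- For each k ≥ 1 there exists a polynomial p_k of degree k such that T(3,n;k) = p_k(n) for all n ≥ k. -/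
/-!
An independent set of the `3 × n` grid meets its last column in one of the patterns
`∅, {0}, {1}, {2}, {0, 2}`. Count the independent `k`-sets whose last column avoids a given set
`p` of rows; deleting the last column gives a recurrence: at width `n + 1` the count is the sum,
over the patterns `q` disjoint from `p`, of the counts of `(k - |q|)`-sets avoiding `q` at
width `n`. The term `q = ∅` is the count for `p = ∅` at width `n` and all other terms have fewer
squares, so by strong induction on `k` every count is, for `n > k`, a polynomial in `n` of
degree `k` with leading coefficient `3 ^ k / k!`. For `p = ∅` the recurrence makes the forward
difference a polynomial of degree `k - 1` with leading coefficient `3 · 3 ^ (k - 1) / (k - 1)!`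
(only the three one-square patterns reach that degree), so the count itself is a polynomial of
degree `k` already from `n = k` on.
-/

open Finset Polynomial
open scoped Nat

theorem descPochhammer_eval_add_one_sub_eval {R : Type*} [CommRing R] (d : ℕ) (x : R) :
    (descPochhammer R (d + 1)).eval (x + 1) - (descPochhammer R (d + 1)).eval x =
      (d + 1) * (descPochhammer R d).eval x := by
  rw [descPochhammer_succ_eval d x, descPochhammer_succ_left, eval_mul, eval_comp]
  simp only [eval_X, eval_sub, eval_one, add_sub_cancel_right]
  ring

theorem exists_eval_add_one_sub_eval_eq {K : Type*} [Field K] [CharZero K] (d : ℕ) :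
    ∀ G : K[X], G.natDegree ≤ d → ∃ F : K[X], F.natDegree ≤ d + 1 ∧
      F.coeff (d + 1) = G.coeff d / (d + 1) ∧ ∀ x, F.eval (x + 1) - F.eval x = G.eval x := by
  induction d with
  | zero =>
    intro G hG
    refine ⟨C (G.coeff 0) * X, natDegree_C_mul_le _ _ |>.trans natDegree_X_le, by simp,
      fun x => ?_⟩
    rw [eq_C_of_natDegree_le_zero hG]
    simp only [eval_mul, eval_C, eval_X, coeff_C_zero]
    ring
  | succ d ih =>
    intro G hG
    set c := G.coeff (d + 1)
    have hdeg : (descPochhammer K (d + 1)).natDegree = d + 1 := descPochhammer_natDegree K _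
    have hdeg' : (descPochhammer K (d + 2)).natDegree = d + 2 := descPochhammer_natDegree K _
    have hlead := (monic_descPochhammer K (d + 1)).coeff_natDegree
    have hlead' := (monic_descPochhammer K (d + 2)).coeff_natDegree
    rw [hdeg] at hlead
    rw [hdeg'] at hlead'
    -- the forward difference of `c / (d + 2) * descPochhammer (d + 2)` is the top term of `G`
    obtain ⟨F, hFdeg, -, hF⟩ := ih (G - C c * descPochhammer K (d + 1)) <| by
      refine natDegree_le_pred (n := d + 1) ?_ (by simp [c, hlead])
      exact (natDegree_sub_le_iff_left (natDegree_C_mul_le _ _ |>.trans hdeg.le)).mpr hG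
    refine ⟨C (c / (d + 2)) * descPochhammer K (d + 2) + F, ?_, ?_, fun x => ?_⟩
    · exact natDegree_add_le_of_degree_le (natDegree_C_mul_le _ _ |>.trans hdeg'.le) (by omega)
    · rw [coeff_add, coeff_C_mul, hlead', coeff_eq_zero_of_natDegree_lt (by omega)]
      push_cast
      ring
    · have hΔ := descPochhammer_eval_add_one_sub_eval (d + 1) x
      have hFx := hF x
      simp only [eval_add, eval_mul, eval_C, eval_sub] at hΔ hFx ⊢
      have : (d + 2 : K) ≠ 0 := by norm_cast
      push_cast at hΔ
      field_simp
      linear_combination c * hΔ + (d + 2 : K) * hFx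

def EventuallyPoly {R : Type*} [CommRing R] (f : ℕ → R) (N d : ℕ) (c : R) : Prop :=
  ∃ P : R[X], P.natDegree ≤ d ∧ P.coeff d = c ∧ ∀ n, N ≤ n → f n = P.eval (n : R)

namespace EventuallyPoly

variable {R : Type*} [CommRing R] {f g : ℕ → R} {N d : ℕ} {a c : R}

theorem const (N : ℕ) (a : R) : EventuallyPoly (fun _ => a) N 0 a :=
  ⟨C a, (natDegree_C a).le, coeff_C_zero, fun _ _ => eval_C.symm⟩

theorem mono (hf : EventuallyPoly f N d c) {N' : ℕ} (hN : N ≤ N') : EventuallyPoly f N' d c :=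
  let ⟨P, hdeg, hc, hP⟩ := hf
  ⟨P, hdeg, hc, fun n hn => hP n (hN.trans hn)⟩

theorem raise (hf : EventuallyPoly f N d c) {d' : ℕ} (hd : d < d') : EventuallyPoly f N d' 0 :=
  let ⟨P, hdeg, _, hP⟩ := hf
  ⟨P, hdeg.trans hd.le, coeff_eq_zero_of_natDegree_lt (hdeg.trans_lt hd), hP⟩

theorem add (hf : EventuallyPoly f N d a) (hg : EventuallyPoly g N d c) :
    EventuallyPoly (f + g) N d (a + c) :=
  let ⟨P, hPdeg, hPc, hP⟩ := hf
  let ⟨Q, hQdeg, hQc, hQ⟩ := hg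
  ⟨P + Q, natDegree_add_le_of_degree_le hPdeg hQdeg, by rw [coeff_add, hPc, hQc],
    fun n hn => by rw [Pi.add_apply, hP n hn, hQ n hn, eval_add]⟩

theorem sum {ι : Type*} {s : Finset ι} {f : ι → ℕ → R} {c : ι → R}
    (hf : ∀ i ∈ s, EventuallyPoly (f i) N d (c i)) :
    EventuallyPoly (fun n => ∑ i ∈ s, f i n) N d (∑ i ∈ s, c i) := by
  classical
  induction s using Finset.induction_on with
  | empty => exact ⟨0, natDegree_zero.trans_le d.zero_le, coeff_zero _, fun _ _ => by simp⟩
  | insert i s hi ih =>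
    simp only [sum_insert hi]
    exact (hf i (mem_insert_self i s)).add (ih fun j hj => hf j (mem_insert_of_mem hj))

theorem shift (hf : EventuallyPoly f N d c) (hg : ∀ n, N ≤ n → g (n + 1) = f n) :
    EventuallyPoly g (N + 1) d c := by
  obtain ⟨P, hdeg, hc, hP⟩ := hf
  refine ⟨taylor (-1) P, (natDegree_taylor P _).le.trans hdeg, ?_, fun m hm => ?_⟩
  · rcases hdeg.lt_or_eq with hlt | rfl
    · rw [coeff_eq_zero_of_natDegree_lt ((natDegree_taylor P _).trans_lt hlt), ← hc,
        coeff_eq_zero_of_natDegree_lt hlt]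
    · rwa [coeff_taylor_natDegree]
  · obtain ⟨n, rfl⟩ : ∃ n, m = n + 1 := ⟨m - 1, by omega⟩
    rw [hg n (by omega), hP n (by omega), taylor_eval]
    push_cast
    ring_nf

theorem of_add_one {K : Type*} [Field K] [CharZero K] {f g : ℕ → K} {c : K}
    (hg : EventuallyPoly g N d c) (hf : ∀ n, N ≤ n → f (n + 1) = f n + g n) :
    EventuallyPoly f N (d + 1) (c / (d + 1)) := by
  obtain ⟨G, hGdeg, rfl, hG⟩ := hg
  obtain ⟨F, hFdeg, hFc, hF⟩ := exists_eval_add_one_sub_eval_eq d G hGdeg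
  refine ⟨F + C (f N - F.eval (N : K)),
    natDegree_add_le_of_degree_le hFdeg ((natDegree_C _).trans_le (Nat.zero_le _)),
    by rw [coeff_add, coeff_C, if_neg (by omega), add_zero, hFc], fun n hn => ?_⟩
  induction n, hn using Nat.le_induction with
  | base => simp
  | succ n hn ih =>
    rw [hf n hn, ih, hG n hn, ← hF]
    simp only [eval_add, eval_C]
    push_cast
    ring

theorem exists_degree_eq (hf : EventuallyPoly f N d c) (hc : c ≠ 0) :
    ∃ P : R[X], P.degree = d ∧ ∀ n, N ≤ n → f n = P.eval (n : R) := by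
  obtain ⟨P, hdeg, hPc, hP⟩ := hf
  exact ⟨P, degree_eq_of_le_of_coeff_ne_zero (natDegree_le_iff_degree_le.mp hdeg) (hPc ▸ hc), hP⟩

end EventuallyPoly

def IsIndep (s : Finset (ℕ × ℕ)) : Prop := ∀ a ∈ s, ∀ b ∈ s, ¬ Adj a b

instance : DecidablePred IsIndep := fun _ => by unfold IsIndep; infer_instance

theorem adj_comm {a b : ℕ × ℕ} : Adj a b ↔ Adj b a := by
  unfold Adj; omega

theorem isIndep_union {A B : Finset (ℕ × ℕ)} :
    IsIndep (A ∪ B) ↔ IsIndep A ∧ IsIndep B ∧ ∀ a ∈ A, ∀ b ∈ B, ¬ Adj a b := by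
  simp only [IsIndep, mem_union]
  constructor
  · intro h
    exact ⟨fun a ha b hb => h a (.inl ha) b (.inl hb), fun a ha b hb => h a (.inr ha) b (.inr hb),
      fun a ha b hb => h a (.inl ha) b (.inr hb)⟩
  · rintro ⟨hA, hB, hAB⟩ a (ha | ha) b (hb | hb)
    exacts [hA a ha b hb, hAB a ha b hb, fun h => hAB b hb a ha (adj_comm.mp h), hB a ha b hb]

def colPatterns : Finset (Finset ℕ) := (range 3).powerset.filter fun q => ∀ r ∈ q, r + 1 ∉ q

def grid (n : ℕ) : Finset (ℕ × ℕ) := range 3 ×ˢ range n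

-- For `n = 0` the grid is empty, so the truncated `n - 1` does no harm.
def avoidSets (p : Finset ℕ) (n k : ℕ) : Finset (Finset (ℕ × ℕ)) :=
  ((grid n).powersetCard k).filter fun s => IsIndep s ∧ Disjoint s (p ×ˢ {n - 1})

theorem mem_avoidSets {p : Finset ℕ} {n k : ℕ} {s : Finset (ℕ × ℕ)} :
    s ∈ avoidSets p n k ↔ s ⊆ grid n ∧ #s = k ∧ IsIndep s ∧ Disjoint s (p ×ˢ {n - 1}) := by
  simp [avoidSets, and_assoc]

def column (s : Finset (ℕ × ℕ)) (c : ℕ) : Finset ℕ := (s.filter (·.2 = c)).image Prod.fst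

@[simp]
theorem mem_column {s : Finset (ℕ × ℕ)} {c r : ℕ} : r ∈ column s c ↔ (r, c) ∈ s := by
  simp [column]

section Columns

variable {t : Finset (ℕ × ℕ)} {n : ℕ}

theorem lt_of_mem_grid {a : ℕ × ℕ} (ha : a ∈ grid n) : a.2 < n := by
  simp only [grid, mem_product, mem_range] at ha
  exact ha.2

theorem disjoint_prod_singleton (ht : t ⊆ grid n) (q : Finset ℕ) : Disjoint t (q ×ˢ {n}) := by
  rw [disjoint_left]
  intro a ha hq
  have := lt_of_mem_grid (ht ha)
  simp only [mem_product, mem_singleton] at hq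
  omega

theorem union_prod_singleton_subset_grid_iff (ht : t ⊆ grid n) {q : Finset ℕ} :
    t ∪ q ×ˢ {n} ⊆ grid (n + 1) ↔ q ⊆ range 3 := by
  have ht' : t ⊆ grid (n + 1) :=
    ht.trans (product_subset_product_right (range_subset_range.mpr n.le_succ))
  rw [union_subset_iff, and_iff_right ht']
  simp [subset_iff, grid]

theorem isIndep_union_prod_singleton_iff (ht : t ⊆ grid n) {q : Finset ℕ} :
    IsIndep (t ∪ q ×ˢ {n}) ↔ IsIndep t ∧ (∀ r ∈ q, r + 1 ∉ q) ∧ Disjoint t (q ×ˢ {n - 1}) := by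
  have hcol : IsIndep (q ×ˢ {n}) ↔ ∀ r ∈ q, r + 1 ∉ q := by
    simp only [IsIndep, Adj, mem_product, mem_singleton]
    constructor
    · intro h r hr hr1
      exact h (r, n) ⟨hr, rfl⟩ (r + 1, n) ⟨hr1, rfl⟩ (.inr ⟨rfl, .inl rfl⟩)
    · rintro h ⟨r, _⟩ ⟨hr, rfl⟩ ⟨r', _⟩ ⟨hr', rfl⟩ hadj
      grind
  -- a square left of the new column can only be adjacent to it horizontally, from column `n - 1`
  have hcross : (∀ a ∈ t, ∀ b ∈ q ×ˢ {n}, ¬ Adj a b) ↔ Disjoint t (q ×ˢ {n - 1}) := by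
    simp only [disjoint_left, Adj, mem_product, mem_singleton]
    constructor
    · rintro h ⟨r, c⟩ ha ⟨hr, rfl⟩
      exact h _ ha (r, n) ⟨hr, rfl⟩ (.inl ⟨rfl, .inl (by have := lt_of_mem_grid (ht ha); grind)⟩)
    · rintro h ⟨r, c⟩ ha ⟨r', _⟩ ⟨hr', rfl⟩ hadj
      have := lt_of_mem_grid (ht ha)
      grind
  rw [isIndep_union, hcol, hcross]

theorem union_prod_singleton_mem_avoidSets_iff (ht : t ⊆ grid n) {p q : Finset ℕ} {k : ℕ} :
    t ∪ q ×ˢ {n} ∈ avoidSets p (n + 1) k ↔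
      (q ∈ colPatterns ∧ Disjoint q p ∧ #q ≤ k) ∧ t ∈ avoidSets q n (k - #q) := by
  have hcard : #(t ∪ q ×ˢ {n}) = #t + #q := by
    rw [card_union_of_disjoint (disjoint_prod_singleton ht q), card_product, card_singleton,
      mul_one]
  have hp : Disjoint (t ∪ q ×ˢ {n}) (p ×ˢ {n}) ↔ Disjoint q p := by
    rw [disjoint_union_left, and_iff_right (disjoint_prod_singleton ht p), disjoint_product]
    simp
  rw [mem_avoidSets, mem_avoidSets, union_prod_singleton_subset_grid_iff ht, hcard,
    isIndep_union_prod_singleton_iff ht, Nat.add_sub_cancel, hp, colPatterns, mem_filter,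
    mem_powerset]
  constructor
  · rintro ⟨hq3, hk, ⟨hti, hq, htq⟩, hqp⟩
    exact ⟨⟨⟨hq3, hq⟩, hqp, by omega⟩, ht, by omega, hti, htq⟩
  · rintro ⟨⟨⟨hq3, hq⟩, hqp, hqk⟩, -, htk, hti, htq⟩
    exact ⟨hq3, by omega, ⟨hti, hq, htq⟩, hqp⟩

theorem filter_lt_union_prod_singleton (ht : t ⊆ grid n) (q : Finset ℕ) :
    (t ∪ q ×ˢ {n}).filter (·.2 < n) = t := by
  rw [filter_union, filter_true_of_mem fun a ha => lt_of_mem_grid (ht ha),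
    filter_false_of_mem (by simp), union_empty]

theorem column_union_prod_singleton (ht : t ⊆ grid n) (q : Finset ℕ) :
    column (t ∪ q ×ˢ {n}) n = q := by
  ext r
  have : (r, n) ∉ t := fun h => (lt_of_mem_grid (ht h)).ne rfl
  simp [this]

theorem filter_lt_union_column {s : Finset (ℕ × ℕ)} (hs : s ⊆ grid (n + 1)) :
    s.filter (·.2 < n) ∪ column s n ×ˢ {n} = s := by
  ext ⟨r, c⟩
  have : (r, c) ∈ s → c < n + 1 := fun h => lt_of_mem_grid (hs h)
  simp only [mem_union, mem_filter, mem_product, mem_column, mem_singleton]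
  grind

theorem filter_lt_subset_grid {s : Finset (ℕ × ℕ)} (hs : s ⊆ grid (n + 1)) :
    s.filter (·.2 < n) ⊆ grid n := by
  intro a ha
  rw [mem_filter] at ha
  have := hs ha.1
  simp only [grid, mem_product, mem_range] at this ⊢
  exact ⟨this.1, ha.2⟩

end Columns

theorem card_avoidSets_succ (p : Finset ℕ) (n k : ℕ) :
    #(avoidSets p (n + 1) k) =
      ∑ q ∈ colPatterns with Disjoint q p ∧ #q ≤ k, #(avoidSets q n (k - #q)) := by
  rw [← card_sigma]
  symm
  refine card_nbij' (fun x => x.2 ∪ x.1 ×ˢ {n}) (fun s => ⟨column s n, s.filter (·.2 < n)⟩)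
    ?_ ?_ ?_ ?_
  · rintro ⟨q, t⟩ h
    simp only [coe_sigma, Set.mem_sigma_iff, mem_coe, mem_filter] at h ⊢
    exact (union_prod_singleton_mem_avoidSets_iff (mem_avoidSets.mp h.2).1).mpr h
  · intro s hs
    have hgrid := (mem_avoidSets.mp hs).1
    rw [mem_coe, ← filter_lt_union_column hgrid,
      union_prod_singleton_mem_avoidSets_iff (filter_lt_subset_grid hgrid)] at hs
    simpa using hs
  · rintro ⟨q, t⟩ h
    simp only [coe_sigma, Set.mem_sigma_iff, mem_coe] at h
    have ht := (mem_avoidSets.mp h.2).1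
    simp only [column_union_prod_singleton ht, filter_lt_union_prod_singleton ht]
  · intro s hs
    exact filter_lt_union_column (mem_avoidSets.mp hs).1

theorem card_avoidSets_empty (n k : ℕ) : #(avoidSets ∅ n k) = T 3 n k := by
  simp only [avoidSets, T, IsIndep, grid, empty_product, disjoint_empty_right, and_true]

theorem card_avoidSets_zero (p : Finset ℕ) (n : ℕ) : #(avoidSets p n 0) = 1 := by
  rw [avoidSets, powersetCard_zero, filter_singleton, if_pos (by simp [IsIndep])]
  rfl

def nonemptyCompat (p : Finset ℕ) (k : ℕ) : Finset (Finset ℕ) :=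
  (colPatterns.filter fun q => Disjoint q p ∧ #q ≤ k).erase ∅

theorem card_avoidSets_succ_eq_add (p : Finset ℕ) (n k : ℕ) :
    #(avoidSets p (n + 1) k) =
      #(avoidSets ∅ n k) + ∑ q ∈ nonemptyCompat p k, #(avoidSets q n (k - #q)) := by
  rw [card_avoidSets_succ, nonemptyCompat, ← add_sum_erase _ _ (a := ∅) (by simp [colPatterns])]
  rfl

theorem card_le_two_of_mem_colPatterns : ∀ q ∈ colPatterns, #q ≤ 2 := by decide

theorem card_filter_colPatterns_card_eq_one : #(colPatterns.filter (#· = 1)) = 3 := by decide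

theorem eventuallyPoly_card_avoidSets_nonempty {j : ℕ}
    (ih : ∀ i < j + 1, ∀ q : Finset ℕ,
      EventuallyPoly (fun n => (#(avoidSets q n i) : ℚ)) (i + 1) i (3 ^ i / i !))
    {p q : Finset ℕ} (hq : q ∈ nonemptyCompat p (j + 1)) :
    EventuallyPoly (fun n => (#(avoidSets q n (j + 1 - #q)) : ℚ)) (j + 1) j
      (if #q = 1 then 3 ^ j / j ! else 0) := by
  simp only [nonemptyCompat, mem_erase, mem_filter] at hq
  obtain ⟨hne, hq, -, hqk⟩ := hq
  have hpos : 0 < #q := card_pos.mpr (nonempty_iff_ne_empty.mpr hne)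
  have h := (ih (j + 1 - #q) (by omega) q).mono (N' := j + 1) (by omega)
  split_ifs with h1
  · simpa [h1] using h
  · exact h.raise (by have := card_le_two_of_mem_colPatterns q hq; omega)

theorem sum_nonemptyCompat_empty (j : ℕ) :
    ∑ q ∈ nonemptyCompat ∅ (j + 1), (if #q = 1 then (3 : ℚ) ^ j / j ! else 0) =
      3 * (3 ^ j / j !) := by
  have hsingle : (nonemptyCompat ∅ (j + 1)).filter (#· = 1) = colPatterns.filter (#· = 1) := by
    ext q
    simp only [nonemptyCompat, mem_filter, mem_erase]
    constructor
    · rintro ⟨⟨-, hq, -⟩, h⟩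
      exact ⟨hq, h⟩
    · rintro ⟨hq, h⟩
      refine ⟨⟨?_, hq, disjoint_empty_right q, by omega⟩, h⟩
      rintro rfl
      simp at h
  rw [← sum_filter, sum_const, nsmul_eq_mul, hsingle, card_filter_colPatterns_card_eq_one]
  norm_num

theorem eventuallyPoly_card_avoidSets_empty (k : ℕ)
    (ih : ∀ i < k, ∀ q : Finset ℕ,
      EventuallyPoly (fun n => (#(avoidSets q n i) : ℚ)) (i + 1) i (3 ^ i / i !)) :
    EventuallyPoly (fun n => (#(avoidSets ∅ n k) : ℚ)) k k (3 ^ k / k !) := by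
  cases k with
  | zero => simpa [card_avoidSets_zero] using EventuallyPoly.const 0 (1 : ℚ)
  | succ j =>
    have hG := EventuallyPoly.sum fun q hq =>
      eventuallyPoly_card_avoidSets_nonempty (p := ∅) ih hq
    rw [sum_nonemptyCompat_empty] at hG
    have hrec : ∀ n, j + 1 ≤ n → (#(avoidSets ∅ (n + 1) (j + 1)) : ℚ) =
        #(avoidSets ∅ n (j + 1)) +
          ∑ q ∈ nonemptyCompat ∅ (j + 1), (#(avoidSets q n (j + 1 - #q)) : ℚ) :=
      fun n _ => by rw [card_avoidSets_succ_eq_add]; push_cast; rfl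
    have hcoeff : (3 : ℚ) ^ (j + 1) / (j + 1)! = 3 * (3 ^ j / j !) / (j + 1) := by
      rw [Nat.factorial_succ, pow_succ]
      push_cast
      field_simp
    exact hcoeff ▸ hG.of_add_one hrec

theorem eventuallyPoly_card_avoidSets (k : ℕ) (p : Finset ℕ) :
    EventuallyPoly (fun n => (#(avoidSets p n k) : ℚ)) (k + 1) k (3 ^ k / k !) := by
  induction k using Nat.strong_induction_on generalizing p with
  | _ k ih =>
    cases k with
    | zero => simpa [card_avoidSets_zero] using EventuallyPoly.const 1 (1 : ℚ)
    | succ j =>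
      have hE := eventuallyPoly_card_avoidSets_empty (j + 1) ih
      have hG := (EventuallyPoly.sum fun q hq =>
        eventuallyPoly_card_avoidSets_nonempty (p := p) ih hq).raise j.lt_succ_self
      simpa using (hE.add hG).shift fun n _ => by simp [card_avoidSets_succ_eq_add]

theorem T3_polynomial_general (k : ℕ) :
    ∃ p : Polynomial ℚ, p.degree = (k : ℕ) ∧
      ∀ n : ℕ, k ≤ n → (T 3 n k : ℚ) = p.eval (n : ℚ) := by
  have h := eventuallyPoly_card_avoidSets_empty k fun i _ => eventuallyPoly_card_avoidSets i
  simp only [card_avoidSets_empty] at h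
  exact h.exists_degree_eq (by positivity)

theorem T3_polynomial (k : ℕ) (hk : 1 ≤ k) :
    ∃ p : Polynomial ℚ, p.degree = (k : ℕ) ∧
      ∀ n : ℕ, k ≤ n → (T 3 n k : ℚ) = p.eval (n : ℚ) :=
  T3_polynomial_general k
end
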